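/- Let τ be the transposition of {0,1,2} swapping 1 and 2 and fixing 0. For every m ≥ 1, every word w ∈ {0,1,2}^m beginning with the letter 0, and every j ∈ {0,1,2}, the integers defined by the recursion (1)–(3) satisfy b(τ∘w, τ(j)) = b(w, j), where τ∘w is the word obtained by applying τ to each letter of w. (This is the 'local symmetry' used in the proof of Theorem 2.4, which also shows the alphabet-symmetric extension of b to all words is well defined.) -/

import Mathlib

/-- `φ`: reread the binary expansion of `n` in base 3, so that
`φ(0) = 0`, `φ(2n) = 3 φ(n)`, `φ(2n+1) = 3 φ(n) + 1`. -/
def phi (n : ℕ) : ℕ := Nat.ofDigits 3 (Nat.digits 2 n)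

/-- `bₙ = 3 φ(n)`. -/
def bseq (n : ℕ) : ℕ := 3 * phi n

/-- The value of a word read as a binary numeral (big-endian). -/
def binVal (w : List (Fin 3)) : ℕ := w.foldl (fun acc d => 2 * acc + d.val) 0

/-- The values assigned in case (1) of the algorithm to the word `0 :: wt`,
all of whose letters lie in `{0, 1}`:  with `n = 2^(m-1) - N(w)`, we set
`b(w,0) = bₙ`, `b(w,1) = -b_{n-1}`, `b(w,2) = 3 - bₙ + b_{n-1}`. -/
def caseOneVal (wt : List (Fin 3)) (j : Fin 3) : ℤ :=
  let n := 2 ^ wt.length - binVal wt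
  if j = 0 then (bseq n : ℤ)
  else if j = 1 then -(bseq (n - 1) : ℤ)
  else 3 - (bseq n : ℤ) + (bseq (n - 1) : ℤ)

/-- `bTail wt j = b(0 :: wt, j)`, the `b`-values on words beginning with the letter `0`,
defined by the recursion (1)–(3) of the paper's algorithms. -/
def bTail : List (Fin 3) → Fin 3 → ℤ
  | [], j => caseOneVal [] j
  | x :: w', j =>
    if ∀ d ∈ x :: w', d = 0 ∨ d = 1 then
      -- case (1), letters in {0,1}
      caseOneVal (x :: w') j
    else if ∀ d ∈ x :: w', d = 0 ∨ d = 2 then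
      -- case (1), letters in {0,2} (with some letter equal to 2): by the 1 ↔ 2 symmetry
      caseOneVal ((x :: w').map (Equiv.swap 1 2)) (Equiv.swap 1 2 j)
    else
      -- cases (2) and (3): drop the second letter of the word
      bTail w' j

/-- `b(w, j)` for an arbitrary word `w`, via the alphabet-symmetric extension
`b(σ ∘ w, σ j) = b(w, j)`. -/
def bVal : List (Fin 3) → Fin 3 → ℤ
  | [], _ => 0
  | i :: wt, j =>
    if i = 0 then bTail wt j
    else if i = 1 then bTail (wt.map (Equiv.swap 0 1)) (Equiv.swap 0 1 j)
    else bTail (wt.map (Equiv.swap 0 2)) (Equiv.swap 0 2 j)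

/-
The transposition `τ = (1 2)` maps the words of case (1) with letters in `{0,1}` to those with
letters in `{0,2}` and vice versa, and the second family is *defined* from the first through `τ`;
it also commutes with the deletion of the second letter in cases (2)–(3). So `b(τ ∘ w, τ j) = b(w, j)`
follows by induction on `w`, except for the all-zero word `0^m`, which lies in both families. There
the claim is `b(0^m, 1) = b(0^m, 2)`, i.e. `b_{2^k} = 2 b_{2^k - 1} + 3`, which is
`φ(2^k) = 3^k = 2 φ(2^k - 1) + 1`.
-/

lemma phi_two_mul {n : ℕ} (hn : 0 < n) : phi (2 * n) = 3 * phi n := by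
  rw [phi, Nat.digits_def' (by norm_num) (by omega), Nat.mul_mod_right,
    Nat.mul_div_cancel_left _ (by norm_num), Nat.ofDigits_cons, phi]
  ring

lemma phi_two_mul_add_one (n : ℕ) : phi (2 * n + 1) = 3 * phi n + 1 := by
  rw [phi, Nat.digits_def' (by norm_num) (by omega), Nat.ofDigits_cons, phi]
  rw [show (2 * n + 1) % 2 = 1 by omega, show (2 * n + 1) / 2 = n by omega]
  ring

lemma phi_two_pow (k : ℕ) : phi (2 ^ k) = 2 * phi (2 ^ k - 1) + 1 := by
  induction k with
  | zero => simp [phi]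
  | succ k ih =>
    have hpos : 0 < 2 ^ k := Nat.two_pow_pos k
    rw [pow_succ', show 2 * 2 ^ k - 1 = 2 * (2 ^ k - 1) + 1 by omega,
      phi_two_mul hpos, phi_two_mul_add_one, ih]
    ring

lemma bseq_two_pow (k : ℕ) : bseq (2 ^ k) = 2 * bseq (2 ^ k - 1) + 3 := by
  rw [bseq, bseq, phi_two_pow]
  ring

lemma binVal_replicate_zero (k : ℕ) : binVal (List.replicate k 0) = 0 := by
  induction k with
  | zero => rfl
  | succ k ih => simpa [binVal, List.replicate_succ] using ih

lemma caseOneVal_replicate_zero_swap (k : ℕ) (j : Fin 3) :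
    caseOneVal (List.replicate k 0) (Equiv.swap 1 2 j) = caseOneVal (List.replicate k 0) j := by
  have hb := bseq_two_pow k
  fin_cases j <;> simp [caseOneVal, binVal_replicate_zero, Equiv.swap_apply_of_ne_of_ne] <;> omega

lemma swap_one_two_zero : Equiv.swap (1 : Fin 3) 2 0 = 0 := by decide

lemma swap_one_two_eq_zero_or_eq_one_iff (d : Fin 3) :
    Equiv.swap 1 2 d = 0 ∨ Equiv.swap 1 2 d = 1 ↔ d = 0 ∨ d = 2 := by
  revert d; decide

lemma swap_one_two_eq_zero_or_eq_two_iff (d : Fin 3) :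
    Equiv.swap 1 2 d = 0 ∨ Equiv.swap 1 2 d = 2 ↔ d = 0 ∨ d = 1 := by
  revert d; decide

lemma bTail_map_swap_one_two (w : List (Fin 3)) (j : Fin 3) :
    bTail (w.map (Equiv.swap 1 2)) (Equiv.swap 1 2 j) = bTail w j := by
  induction w generalizing j with
  | nil => exact caseOneVal_replicate_zero_swap 0 j
  | cons x w ih =>
    rw [List.map_cons, bTail, bTail, ← List.map_cons]
    simp only [List.forall_mem_map, swap_one_two_eq_zero_or_eq_one_iff,
      swap_one_two_eq_zero_or_eq_two_iff]
    split_ifs with h02 h01 h01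
    · have hzero : x :: w = List.replicate (x :: w).length 0 :=
        List.eq_replicate_iff.2 ⟨rfl, fun d hd => by
          rcases h01 d hd with h | h <;> rcases h02 d hd with h' | h' <;> simp_all⟩
      rw [hzero, List.map_replicate, swap_one_two_zero]
      exact caseOneVal_replicate_zero_swap _ j
    · rfl
    · simp [List.map_map, Function.comp_def, Equiv.swap_apply_self]
    · exact ih j

theorem bVal_swap_one_two_general (w : List (Fin 3)) (h0 : w.head? = some 0) (j : Fin 3) :
    bVal (w.map (Equiv.swap 1 2)) (Equiv.swap 1 2 j) = bVal w j := by
  obtain ⟨w, rfl⟩ : ∃ w', w = 0 :: w' := by simpa [List.head?_eq_some_iff] using h0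
  rw [List.map_cons, swap_one_two_zero, bVal, bVal, if_pos rfl, if_pos rfl]
  exact bTail_map_swap_one_two w j

/-- The 'local symmetry' used in the proof of Theorem 2.4: with `τ` the transposition
swapping `1` and `2` (and fixing `0`), for every word `w` of length `m ≥ 1` beginning
with the letter `0` and every `j`, one has `b(τ ∘ w, τ j) = b(w, j)`. -/
theorem bVal_swap_one_two (m : ℕ) (hm : 1 ≤ m) (w : List (Fin 3)) (hw : w.length = m)
    (h0 : w.head? = some 0) (j : Fin 3) :
    bVal (w.map (Equiv.swap 1 2)) (Equiv.swap 1 2 j) = bVal w j :=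
  bVal_swap_one_two_general w h0 j
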